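/- If u: [0,T] → ℝ is differentiable with u(0) = 0, u(t) ≥ 0 for all t, and d/dt u(t) ≤ 2κ√(u(t)) for all t ∈ [0,T] for some κ > 0, then u(t) ≤ κ²t² for all t ∈ [0,T]. -/

import Mathlib

/-- Comparison principle: if `u(0) = 0`, `u ≥ 0`, and `u' ≤ 2κ√u` on `[0,T]`,
then `u(t) ≤ κ²t²` on `[0,T]`. -/
theorem stmt_0 (T κ : ℝ) (hT : 0 ≤ T) (hκ : 0 < κ) (u u' : ℝ → ℝ)
    (hderiv : ∀ t ∈ Set.Icc (0 : ℝ) T, HasDerivAt u (u' t) t)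
    (h0 : u 0 = 0)
    (hnonneg : ∀ t ∈ Set.Icc (0 : ℝ) T, 0 ≤ u t)
    (hineq : ∀ t ∈ Set.Icc (0 : ℝ) T, u' t ≤ 2 * κ * Real.sqrt (u t)) :
    ∀ t ∈ Set.Icc (0 : ℝ) T, u t ≤ κ ^ 2 * t ^ 2 := by
  intro t ht
  have key : ∀ ε > (0:ℝ), u t ≤ ((κ + ε) * t + ε) ^ 2 := by
    intro ε hε
    have hcont : ContinuousOn u (Set.Icc 0 T) := fun x hx =>
      (hderiv x hx).continuousAt.continuousWithinAt
    have := image_le_of_deriv_right_lt_deriv_boundary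
      (f := u) (f' := u') (a := 0) (b := T)
      (B := fun x => ((κ + ε) * x + ε) ^ 2)
      (B' := fun x => 2 * (κ + ε) * ((κ + ε) * x + ε))
      hcont
      (fun x hx => (hderiv x (Set.Ico_subset_Icc_self hx)).hasDerivWithinAt)
      (by rw [h0]; positivity)
      (fun x => by
        have h1 : HasDerivAt (fun x : ℝ => (κ + ε) * x + ε) (κ + ε) x := by
          simpa using ((hasDerivAt_id x).const_mul (κ + ε)).add_const ε
        have := h1.fun_pow 2
        refine this.congr_deriv ?_
        norm_num <;> ring)
      (fun x hx heq => by
        have hx' : x ∈ Set.Icc (0:ℝ) T := Set.Ico_subset_Icc_self hx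
        have hpos : 0 < (κ + ε) * x + ε :=
          add_pos_of_nonneg_of_pos (mul_nonneg (by linarith) hx.1) hε
        have hsqrt : Real.sqrt (u x) = (κ + ε) * x + ε := by
          rw [heq, Real.sqrt_sq hpos.le]
        calc u' x ≤ 2 * κ * Real.sqrt (u x) := hineq x hx'
          _ = 2 * κ * ((κ + ε) * x + ε) := by rw [hsqrt]
          _ < 2 * (κ + ε) * ((κ + ε) * x + ε) := by nlinarith)
      ht
    simpa using this
  have hlim : Filter.Tendsto (fun ε : ℝ => ((κ + ε) * t + ε) ^ 2)
      (nhdsWithin 0 (Set.Ioi 0)) (nhds (κ ^ 2 * t ^ 2)) := by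
    have : Filter.Tendsto (fun ε : ℝ => ((κ + ε) * t + ε) ^ 2) (nhds 0)
        (nhds (((κ + 0) * t + 0) ^ 2)) := by
      apply Continuous.tendsto
      continuity
    simpa [mul_pow, mul_comm] using this.mono_left nhdsWithin_le_nhds
  exact ge_of_tendsto hlim (Filter.eventually_of_mem self_mem_nhdsWithin
    fun ε hε => key ε hε)
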